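/- With Δ(T) and torsion coefficients t_i as above, assuming r ≥ 3 and n_2 = n_1 − 1: t_i = 1 if and only if n_3 ≤ i ≤ n_1 − 1. -/

import Mathlib

/-- Coefficient `a_m` of `T^m` in `Δ(T) = (-1)^r + ∑_{j=1}^r (-1)^{j-1}(T^{n_j} + T^{-n_j})`. -/
def coeff (r : ℕ) (nn : ℕ → ℕ) (m : ℤ) : ℤ :=
  (if m = 0 then (-1 : ℤ) ^ r else 0) +
    ∑ j ∈ Finset.Icc 1 r, if (nn j : ℤ) = |m| then (-1 : ℤ) ^ (j - 1) else 0

/-- The `i`-th torsion coefficient `t_i = ∑_{j ≥ 1} j · a_{i+j}`. -/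
def tors (r : ℕ) (nn : ℕ → ℕ) (i : ℕ) : ℤ :=
  ∑ j ∈ Finset.range (nn 1 + 1), (j : ℤ) * coeff r nn ((i : ℤ) + j)

/-- The exponent data of a Laurent polynomial of L-space-knot form:
`n_1 > n_2 > ... > n_r > 0`. -/
def LSpaceForm (r : ℕ) (nn : ℕ → ℕ) : Prop :=
  1 ≤ r ∧ (∀ j, 1 ≤ j → j ≤ r → 0 < nn j) ∧ ∀ j, 1 ≤ j → j + 1 ≤ r → nn (j + 1) < nn j

/-!
Exchanging the two sums in the definition of `t_i` gives
`t_i = ∑_{k=1}^r (-1)^{k-1} max(n_k - i, 0)`. When `n_2 = n_1 - 1`, the first two terms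
contribute `1` for `i < n_1` and `0` otherwise, while the rest is an alternating sum of a
non-increasing sequence of non-negative integers: it vanishes for `i ≥ n_3` and, since its
first term `n_3 - i` strictly exceeds the second (if any), it is at least `1` for `i < n_3`.
-/

open Finset

section AlternatingSum

variable {α : Type*} [Ring α]

theorem alternating_sum_range_succ_eq_sub (g : ℕ → α) (n : ℕ) :
    ∑ k ∈ range (n + 1), (-1) ^ k * g k = g 0 - ∑ k ∈ range n, (-1) ^ k * g (k + 1) := by
  simp only [sum_range_succ', pow_succ, mul_neg_one, neg_mul, sum_neg_distrib, pow_zero, one_mul]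
  abel

variable [LinearOrder α] [IsOrderedRing α]

theorem alternating_sum_range_succ_mem_Icc {g : ℕ → α} {n : ℕ}
    (hanti : ∀ k < n, g (k + 1) ≤ g k) (hnonneg : ∀ k ≤ n, 0 ≤ g k) :
    ∑ k ∈ range (n + 1), (-1) ^ k * g k ∈ Set.Icc 0 (g 0) := by
  induction n generalizing g with
  | zero => simpa using hnonneg 0 le_rfl
  | succ n ih =>
    obtain ⟨htail_nonneg, htail_le⟩ :
        ∑ k ∈ range (n + 1), (-1) ^ k * g (k + 1) ∈ Set.Icc 0 (g 1) :=
      ih (fun k hk ↦ hanti (k + 1) (by omega)) (fun k hk ↦ hnonneg (k + 1) (by omega))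
    have h10 : g 1 ≤ g 0 := hanti 0 n.succ_pos
    rw [alternating_sum_range_succ_eq_sub]
    exact ⟨sub_nonneg.mpr (htail_le.trans h10), sub_le_self _ htail_nonneg⟩

theorem alternating_sum_range_succ_pos {g : ℕ → α} {n : ℕ}
    (hanti : ∀ k < n, g (k + 1) ≤ g k) (hnonneg : ∀ k ≤ n, 0 ≤ g k) (hpos : 0 < g 0)
    (hstrict : 0 < n → g 1 < g 0) :
    0 < ∑ k ∈ range (n + 1), (-1) ^ k * g k := by
  rcases n with _ | n
  · simpa using hpos
  obtain ⟨-, htail_le⟩ : ∑ k ∈ range (n + 1), (-1) ^ k * g (k + 1) ∈ Set.Icc 0 (g 1) :=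
    alternating_sum_range_succ_mem_Icc
      (fun k hk ↦ hanti (k + 1) (by omega)) (fun k hk ↦ hnonneg (k + 1) (by omega))
  rw [alternating_sum_range_succ_eq_sub]
  exact sub_pos.mpr (htail_le.trans_lt (hstrict n.succ_pos))

end AlternatingSum

namespace LSpaceForm

variable {r : ℕ} {nn : ℕ → ℕ}

theorem strictAntiOn (h : LSpaceForm r nn) : StrictAntiOn nn (Set.Icc 1 r) :=
  strictAntiOn_of_succ_lt Set.ordConnected_Icc fun a _ ha hb ↦ h.2.2 a ha.1 hb.2

theorem lt_of_lt (h : LSpaceForm r nn) {j k : ℕ} (hj : 1 ≤ j) (hjk : j < k) (hk : k ≤ r) :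
    nn k < nn j :=
  h.strictAntiOn ⟨hj, by omega⟩ ⟨by omega, hk⟩ hjk

theorem le_of_le (h : LSpaceForm r nn) {j k : ℕ} (hj : 1 ≤ j) (hjk : j ≤ k) (hk : k ≤ r) :
    nn k ≤ nn j :=
  h.strictAntiOn.antitoneOn ⟨hj, by omega⟩ ⟨by omega, hk⟩ hjk

end LSpaceForm

theorem coeff_of_pos (r : ℕ) (nn : ℕ → ℕ) {m : ℤ} (hm : 0 < m) :
    coeff r nn m = ∑ k ∈ range r, if (nn (k + 1) : ℤ) = m then (-1) ^ k else 0 := by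
  rw [coeff, if_neg hm.ne', zero_add, abs_of_pos hm, ← Finset.Ico_add_one_right_eq_Icc,
    sum_Ico_eq_sum_range, Nat.add_sub_cancel]
  simp only [add_comm 1, Nat.add_sub_cancel]

theorem sum_range_ite_eq_tsub {n i N : ℕ} (hn : n ≤ i + N) :
    ∑ j ∈ range (N + 1), (if (n : ℤ) = i + j then (j : ℤ) else 0) = ((n - i : ℕ) : ℤ) := by
  rcases le_or_gt i n with hin | hni
  · rw [sum_eq_single (n - i) (fun j _ hj ↦ if_neg (by omega)) (fun h ↦ by simp at h; omega),
      if_pos (by omega)]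
  · rw [sum_eq_zero fun j _ ↦ if_neg (by omega), Nat.sub_eq_zero_of_le hni.le, Nat.cast_zero]

theorem tors_eq_alternating_sum {r : ℕ} {nn : ℕ → ℕ} (hle : ∀ k < r, nn (k + 1) ≤ nn 1)
    (i : ℕ) : tors r nn i = ∑ k ∈ range r, (-1) ^ k * ((nn (k + 1) - i : ℕ) : ℤ) := by
  calc tors r nn i
      = ∑ j ∈ range (nn 1 + 1), ∑ k ∈ range r,
          (-1) ^ k * (if (nn (k + 1) : ℤ) = i + j then (j : ℤ) else 0) := by
        refine sum_congr rfl fun j _ ↦ ?_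
        rcases j.eq_zero_or_pos with rfl | hj
        · simp
        rw [coeff_of_pos r nn (by positivity), mul_sum]
        refine sum_congr rfl fun k _ ↦ ?_
        split_ifs <;> ring
    _ = ∑ k ∈ range r, (-1) ^ k * ((nn (k + 1) - i : ℕ) : ℤ) := by
        rw [sum_comm]
        refine sum_congr rfl fun k hk ↦ ?_
        rw [← mul_sum, sum_range_ite_eq_tsub (by have := hle k (mem_range.mp hk); omega)]

theorem tors_eq_sub_add_alternating_sum {m : ℕ} {nn : ℕ → ℕ} (h : LSpaceForm (m + 3) nn)
    (i : ℕ) : tors (m + 3) nn i = ((nn 1 - i : ℕ) : ℤ) - ((nn 2 - i : ℕ) : ℤ) +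
      ∑ k ∈ range (m + 1), (-1) ^ k * ((nn (k + 3) - i : ℕ) : ℤ) := by
  rw [tors_eq_alternating_sum (fun k hk ↦ h.le_of_le le_rfl (by omega) (by omega)),
    sum_range_succ', sum_range_succ']
  simp only [add_assoc, Nat.reduceAdd, zero_add, pow_add, neg_one_sq, mul_one]
  ring

theorem stmt_9 (r : ℕ) (nn : ℕ → ℕ) (h : LSpaceForm r nn) (hr : 3 ≤ r)
    (h2 : nn 2 = nn 1 - 1) :
    ∀ i : ℕ, tors r nn i = 1 ↔ nn 3 ≤ i ∧ i ≤ nn 1 - 1 := by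
  intro i
  obtain ⟨m, rfl⟩ : ∃ m, r = m + 3 := ⟨r - 3, by omega⟩
  have h32 : nn 3 < nn 2 := h.lt_of_lt (by norm_num) (by norm_num) (by omega)
  rw [tors_eq_sub_add_alternating_sum h]
  rcases le_or_gt (nn 3) i with h3i | hi3
  · have htail : ∑ k ∈ range (m + 1), (-1) ^ k * ((nn (k + 3) - i : ℕ) : ℤ) = 0 :=
      sum_eq_zero fun k hk ↦ by
        have := h.le_of_le (by norm_num) (by omega : 3 ≤ k + 3) (by have := mem_range.mp hk; omega)
        simp [Nat.sub_eq_zero_of_le (this.trans h3i)]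
    omega
  · have htail : 0 < ∑ k ∈ range (m + 1), (-1) ^ k * ((nn (k + 3) - i : ℕ) : ℤ) :=
      alternating_sum_range_succ_pos (g := fun k ↦ ((nn (k + 3) - i : ℕ) : ℤ))
        (fun k hk ↦ Nat.cast_le.mpr (Nat.sub_le_sub_right
          (h.le_of_le (by omega) (by omega) (by omega)) i))
        (fun k _ ↦ Nat.cast_nonneg _) (show (0 : ℤ) < ((nn 3 - i : ℕ) : ℤ) by omega)
        (fun hm ↦ by
          have : nn 4 < nn 3 := h.lt_of_lt (by norm_num) (by norm_num) (by omega)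
          show ((nn 4 - i : ℕ) : ℤ) < ((nn 3 - i : ℕ) : ℤ)
          omega)
    omega
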